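/- arXiv:1410.5995 — 3 statements merged into one kernel-verified Lean document; each statement's English description precedes it below -/
import Mathlib

section
/- Let G be a finite connected signed graph. The twisted Laplacian Δ^τ has a nontrivial kernel if and only if G is coherently signed. -/
open scoped Classical
open Matrix

noncomputable section

namespace SignedPaper

variable {V : Type*}

/-- The twisted Laplacian `Δ^τ` of a signed graph: `(Δ^τ f)(x) = d(x) f(x) - ∑_{y ∈ N(x)} sgn(x,y) f(y)`. -/
def twistedLaplacian [Fintype V] [DecidableEq V] (G : SimpleGraph V) [DecidableRel G.Adj]
    (sgn : Sym2 V → ℝ) : Matrix V V ℝ :=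
  Matrix.of fun x y =>
    if x = y then (G.degree x : ℝ) else if G.Adj x y then - sgn s(x, y) else 0

/-- The sign function takes values ±1 on every edge. -/
def IsSigning (G : SimpleGraph V) (sgn : Sym2 V → ℝ) : Prop :=
  ∀ e ∈ G.edgeSet, sgn e = 1 ∨ sgn e = -1

/-- A signed graph is coherently signed if every cycle has sign +1. -/
def IsCoherent (G : SimpleGraph V) (sgn : Sym2 V → ℝ) : Prop :=
  ∀ (v : V) (c : G.Walk v v), c.IsCycle → (c.edges.map sgn).prod = 1

/-- The subgraph induced on a vertex subset `S`, viewed as a graph on `V`. -/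
def inducedOn (G : SimpleGraph V) (S : Set V) : SimpleGraph V where
  Adj x y := G.Adj x y ∧ x ∈ S ∧ y ∈ S
  symm := ⟨fun x y h => ⟨h.1.symm, h.2.2, h.2.1⟩⟩
  loopless := ⟨fun x h => G.loopless.irrefl x h.1⟩

/-- `e_mc(S)`: the minimal number of edges to delete from the induced subgraph on `S`
so that the result is coherently signed. -/
def emc (G : SimpleGraph V) (sgn : Sym2 V → ℝ) (S : Set V) : ℕ :=
  sInf {n : ℕ | ∃ F : Finset (Sym2 V), F.card = n ∧ ↑F ⊆ (inducedOn G S).edgeSet ∧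
    IsCoherent ((inducedOn G S).deleteEdges ↑F) sgn}

/-- `∂S`: the set of edges with exactly one endpoint in `S`. -/
def edgeBoundary [Fintype V] [DecidableEq V] (G : SimpleGraph V) (S : Set V) :
    Finset (Sym2 V) :=
  Finset.univ.filter fun e : Sym2 V => e ∈ G.edgeSet ∧ ∃ x y, e = s(x, y) ∧ x ∈ S ∧ y ∉ S

/-- `ψ(S) = (|∂S| + 2 e_mc(S)) / |S|`. -/
def psiSet [Fintype V] [DecidableEq V] (G : SimpleGraph V) (sgn : Sym2 V → ℝ)
    (S : Finset V) : ℝ :=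
  ((edgeBoundary G ↑S).card + 2 * emc G sgn ↑S) / S.card

/-- `ψ(G) = min_{∅ ≠ S ⊆ V} ψ(S)`. -/
def psi [Fintype V] [DecidableEq V] (G : SimpleGraph V) (sgn : Sym2 V → ℝ) : ℝ :=
  sInf {x : ℝ | ∃ S : Finset V, S.Nonempty ∧ x = psiSet G sgn S}

/-- `ψ̃(G) = min_{∅ ≠ S ⊆ V} (|∂S| + 4 e_mc(S)) / |S|`. -/
def psiTilde [Fintype V] [DecidableEq V] (G : SimpleGraph V) (sgn : Sym2 V → ℝ) : ℝ :=
  sInf {x : ℝ | ∃ S : Finset V, S.Nonempty ∧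
    x = ((edgeBoundary G ↑S).card + 4 * emc G sgn ↑S) / S.card}

/-- `h(S) = min_{∅ ≠ T ⊆ S} |∂T| / |T|`. -/
def hConst [Fintype V] [DecidableEq V] (G : SimpleGraph V) (S : Finset V) : ℝ :=
  sInf {x : ℝ | ∃ T : Finset V, T ⊆ S ∧ T.Nonempty ∧ x = (edgeBoundary G ↑T).card / T.card}

/-- The signed adjacency matrix `A^τ`. -/
def signedAdjMatrix [Fintype V] (G : SimpleGraph V) [DecidableRel G.Adj]
    (sgn : Sym2 V → ℝ) : Matrix V V ℝ :=
  Matrix.of fun x y => if G.Adj x y then sgn s(x, y) else 0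

/-!
Writing `Δ^τ f(x) = ∑_{y ~ x} (f x - sgn(x,y) f y)` and using `sgn² = 1` on edges, the quadratic
form of `Δ^τ` is `½ ∑_{x ~ y} (f x - sgn(x,y) f y)²`, so the kernel consists of the functions
with `sgn(x,y) f y = f x` along every edge. Such a function satisfies `f u = sgn(p) f w` along
every walk `p` from `u` to `w`; on a connected graph a nonzero one vanishes nowhere, so every
closed walk has sign `+1`. Conversely, if every cycle has sign `+1` then so does every closed
walk (shortcut it to a path, splitting off one cycle at a time), so `f x := sgn(p_x)` for any walk
`p_x` from `x` to a fixed base vertex is well defined and lies in the kernel.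
-/

section

variable {G : SimpleGraph V} {sgn : Sym2 V → ℝ}

lemma IsSigning.mul_self (hsgn : IsSigning G sgn) {u v : V} (h : G.Adj u v) :
    sgn s(u, v) * sgn s(u, v) = 1 := by
  rcases hsgn _ (G.mem_edgeSet.2 h) with hs | hs <;> rw [hs] <;> norm_num

def walkSign (sgn : Sym2 V → ℝ) {u v : V} (p : G.Walk u v) : ℝ :=
  (p.edges.map sgn).prod

section walkSign

variable {u v w : V}

@[simp]
lemma walkSign_nil : walkSign sgn (SimpleGraph.Walk.nil : G.Walk u u) = 1 := by
  simp [walkSign]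

@[simp]
lemma walkSign_cons (h : G.Adj u v) (p : G.Walk v w) :
    walkSign sgn (.cons h p) = sgn s(u, v) * walkSign sgn p := by
  simp [walkSign]

@[simp]
lemma walkSign_append (p : G.Walk u v) (q : G.Walk v w) :
    walkSign sgn (p.append q) = walkSign sgn p * walkSign sgn q := by
  simp [walkSign]

@[simp]
lemma walkSign_reverse (p : G.Walk u v) : walkSign sgn p.reverse = walkSign sgn p := by
  simp [walkSign, List.prod_reverse]

lemma walkSign_mul_self (hsgn : IsSigning G sgn) (p : G.Walk u v) :
    walkSign sgn p * walkSign sgn p = 1 := by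
  induction p with
  | nil => simp
  | cons h p ih =>
    rw [walkSign_cons]
    linear_combination sgn s(_, _) ^ 2 * ih + hsgn.mul_self h

end walkSign

/-- `f` is a parallel section of the flat line bundle with holonomy `sgn`; these functions turn
out to be exactly the kernel of `Δ^τ`. -/
def IsParallel (G : SimpleGraph V) (sgn : Sym2 V → ℝ) (f : V → ℝ) : Prop :=
  ∀ ⦃x y : V⦄, G.Adj x y → sgn s(x, y) * f y = f x

namespace IsParallel

variable {f : V → ℝ} (hf : IsParallel G sgn f)
include hf

lemma apply_eq_walkSign_mul {u w : V} (p : G.Walk u w) : f u = walkSign sgn p * f w := by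
  induction p with
  | nil => simp
  | cons h p ih => rw [walkSign_cons, mul_assoc, ← ih, hf h]

lemma walkSign_eq_one {v : V} (hv : f v ≠ 0) (c : G.Walk v v) : walkSign sgn c = 1 :=
  mul_right_cancel₀ hv (by rw [one_mul, ← hf.apply_eq_walkSign_mul c])

lemma eq_zero_of_apply_eq_zero (hG : G.Preconnected) {v : V} (hv : f v = 0) : f = 0 :=
  funext fun w => by rw [hf.apply_eq_walkSign_mul (hG w v).some, hv, mul_zero, Pi.zero_apply]

lemma isCoherent (hG : G.Preconnected) (hf0 : f ≠ 0) : IsCoherent G sgn :=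
  fun _ c _ => hf.walkSign_eq_one (fun hv => hf0 (hf.eq_zero_of_apply_eq_zero hG hv)) c

end IsParallel

namespace IsCoherent

variable (hsgn : IsSigning G sgn) (hcoh : IsCoherent G sgn)
include hsgn hcoh

lemma walkSign_cons_of_isPath {u x : V} (ha : G.Adj u x) {q : G.Walk x u} (hq : q.IsPath) :
    walkSign sgn (.cons ha q) = 1 := by
  by_cases he : s(u, x) ∈ q.edges
  · rw [hq.eq_adj_toWalk_of_mem_edges (Sym2.eq_swap ▸ he)]
    simp [SimpleGraph.Adj.toWalk, Sym2.eq_swap, hsgn.mul_self ha]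
  · exact hcoh u _ ((SimpleGraph.Walk.cons_isCycle_iff q ha).2 ⟨hq, he⟩)

lemma walkSign_bypass [DecidableEq V] {u v : V} (p : G.Walk u v) :
    walkSign sgn p.bypass = walkSign sgn p := by
  induction p with
  | nil => rfl
  | cons ha p ih =>
    rw [SimpleGraph.Walk.bypass]
    split_ifs with hs
    · have hcycle := walkSign_cons_of_isPath hsgn hcoh ha (p.bypass_isPath.takeUntil hs)
      rw [walkSign_cons] at hcycle
      rw [walkSign_cons, ← ih]
      conv_rhs => rw [← p.bypass.take_spec hs, walkSign_append, ← mul_assoc, hcycle, one_mul]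
    · rw [walkSign_cons, walkSign_cons, ih]

lemma walkSign_eq_one {v : V} (c : G.Walk v v) : walkSign sgn c = 1 := by
  classical
  rw [← walkSign_bypass hsgn hcoh, (SimpleGraph.Walk.isPath_iff_nil.1 c.bypass_isPath).eq_nil,
    walkSign_nil]

lemma walkSign_eq {u v : V} (p q : G.Walk u v) : walkSign sgn p = walkSign sgn q := by
  have h := walkSign_eq_one hsgn hcoh (p.append q.reverse)
  rw [walkSign_append, walkSign_reverse] at h
  linear_combination walkSign sgn q * h - walkSign sgn p * walkSign_mul_self hsgn q

lemma exists_isParallel_ne_zero [Nonempty V] (hG : G.Preconnected) :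
    ∃ f : V → ℝ, f ≠ 0 ∧ IsParallel G sgn f := by
  obtain ⟨v₀⟩ := ‹Nonempty V›
  refine ⟨fun x => walkSign sgn (hG x v₀).some, fun h0 => ?_, fun x y hxy => ?_⟩
  · have := congr_fun h0 v₀
    simp [walkSign_eq hsgn hcoh _ SimpleGraph.Walk.nil] at this
  · exact (walkSign_cons hxy _).symm.trans (walkSign_eq hsgn hcoh _ _)

end IsCoherent

section Laplacian

variable [Fintype V] [DecidableEq V] [DecidableRel G.Adj]

lemma twistedLaplacian_mulVec_apply (f : V → ℝ) (x : V) :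
    (twistedLaplacian G sgn *ᵥ f) x = ∑ y ∈ G.neighborFinset x, (f x - sgn s(x, y) * f y) := by
  have hrow : twistedLaplacian G sgn x = Pi.single x (G.degree x : ℝ) +
      fun y => if G.Adj x y then -sgn s(x, y) else 0 := by
    ext y
    by_cases hxy : x = y
    · subst hxy
      simp [twistedLaplacian]
    · simp [twistedLaplacian, hxy, Ne.symm hxy]
  rw [Finset.sum_sub_distrib, Finset.sum_const, SimpleGraph.card_neighborFinset_eq_degree,
    nsmul_eq_mul, mulVec, hrow, add_dotProduct, single_dotProduct, dotProduct,
    SimpleGraph.neighborFinset_eq_filter, Finset.sum_filter, sub_eq_add_neg,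
    ← Finset.sum_neg_distrib]
  congr 1
  exact Finset.sum_congr rfl fun y _ => by split_ifs <;> ring

lemma IsParallel.twistedLaplacian_mulVec_eq_zero {f : V → ℝ} (hf : IsParallel G sgn f) :
    twistedLaplacian G sgn *ᵥ f = 0 :=
  funext fun x => by
    rw [twistedLaplacian_mulVec_apply]
    exact Finset.sum_eq_zero fun y hy => by rw [hf ((G.mem_neighborFinset x y).1 hy), sub_self]

lemma two_mul_dotProduct_twistedLaplacian_mulVec (hsgn : IsSigning G sgn) (f : V → ℝ) :
    2 * (f ⬝ᵥ twistedLaplacian G sgn *ᵥ f) =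
      ∑ x, ∑ y ∈ G.neighborFinset x, (f x - sgn s(x, y) * f y) ^ 2 := by
  have hswap : ∑ x, ∑ y ∈ G.neighborFinset x, f y ^ 2 = ∑ x, ∑ y ∈ G.neighborFinset x, f x ^ 2 :=
    Finset.sum_comm' (by simp [SimpleGraph.adj_comm])
  have hterm : ∀ x, ∀ y ∈ G.neighborFinset x, (f x - sgn s(x, y) * f y) ^ 2 =
      2 * (f x * (f x - sgn s(x, y) * f y)) - f x ^ 2 + f y ^ 2 := fun x y hy => by
    linear_combination f y ^ 2 * hsgn.mul_self ((G.mem_neighborFinset x y).1 hy)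
  simp only [dotProduct, twistedLaplacian_mulVec_apply, Finset.mul_sum]
  rw [Finset.sum_congr rfl fun x _ => Finset.sum_congr rfl (hterm x)]
  simp only [Finset.sum_add_distrib, Finset.sum_sub_distrib, hswap]
  ring

lemma isParallel_of_twistedLaplacian_mulVec_eq_zero (hsgn : IsSigning G sgn) {f : V → ℝ}
    (hf : twistedLaplacian G sgn *ᵥ f = 0) : IsParallel G sgn f := by
  intro x y hxy
  have hsum := two_mul_dotProduct_twistedLaplacian_mulVec hsgn f
  rw [hf, dotProduct_zero, mul_zero, eq_comm, Finset.sum_eq_zero_iff_of_nonneg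
    fun _ _ => Finset.sum_nonneg fun _ _ => sq_nonneg _] at hsum
  have hxy' := (Finset.sum_eq_zero_iff_of_nonneg fun _ _ => sq_nonneg _).1
    (hsum x (Finset.mem_univ x)) y ((G.mem_neighborFinset x y).2 hxy)
  linarith [pow_eq_zero_iff two_ne_zero |>.1 hxy']

end Laplacian

end

/-- For a finite connected signed graph, the twisted Laplacian has a
nontrivial kernel iff the graph is coherently signed. -/
theorem twistedLaplacian_ker_iff_isCoherent [Fintype V] [DecidableEq V] (G : SimpleGraph V)
    [DecidableRel G.Adj] (hG : G.Connected) (sgn : Sym2 V → ℝ) (hsgn : IsSigning G sgn) :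
    (∃ f : V → ℝ, f ≠ 0 ∧ (twistedLaplacian G sgn).mulVec f = 0) ↔ IsCoherent G sgn := by
  constructor
  · rintro ⟨f, hf0, hf⟩
    exact (isParallel_of_twistedLaplacian_mulVec_eq_zero hsgn hf).isCoherent hG.preconnected hf0
  · intro hcoh
    have := hG.nonempty
    obtain ⟨f, hf0, hf⟩ := hcoh.exists_isParallel_ne_zero hsgn hG.preconnected
    exact ⟨f, hf0, hf.twistedLaplacian_mulVec_eq_zero⟩

end SignedPaper
end
end

section
/- Let G be a finite signed graph and let S and T be disjoint subsets of V with S ∪ T nonempty. Then ⟨r_{S,T}, Δ^τ r_{S,T}⟩ ≥ 4 e_mc(S ∪ T) + |∂(S ∪ T)|, where r_{S,T} is the function equal to 1 on S, −1 on T and 0 elsewhere. -/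
open scoped Classical
open Matrix

noncomputable section

namespace SignedPaper

variable {V : Type*}

/-!
Each edge `xy` contributes `f x ^ 2 + f y ^ 2 - 2 τ(xy) f x f y = (f x - τ(xy) f y) ^ 2 ≥ 0` to
`⟨f, Δ^τ f⟩`. For `f = r_{S,T}` this is `1` on the boundary edges of `U = S ∪ T`, and on an edge
inside `U` it is `0` if `τ(xy) = f x f y` and `4` otherwise. Deleting the edges of the second kind
leaves a signing that is the switching of the all-positive one by `f`: along any walk the product
of the signs telescopes, so the result is coherent, and there are at least `e_mc(U)` such edges.
-/

section EdgeSums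

variable [Fintype V] (G : SimpleGraph V) [DecidableRel G.Adj] {M : Type*} [AddCommMonoid M]

lemma sum_adj_eq_sum_darts (g : V → V → M) :
    ∑ x, ∑ y, (if G.Adj x y then g x y else 0) = ∑ d : G.Dart, g d.fst d.snd := by
  rw [← Finset.sum_product', Finset.univ_product_univ, ← Finset.sum_filter]
  exact (Finset.sum_bij' (fun (d : G.Dart) _ => d.toProd)
    (fun p hp => ⟨p, (Finset.mem_filter.mp hp).2⟩) (by simp) (by simp) (by simp) (by simp)
    (by simp)).symm

lemma sum_darts_edge_eq_two_nsmul [DecidableEq V] (F : Sym2 V → M) :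
    ∑ d : G.Dart, F d.edge = 2 • ∑ e ∈ G.edgeFinset, F e := by
  rw [← Finset.sum_fiberwise_of_maps_to (g := SimpleGraph.Dart.edge) (t := G.edgeFinset)
      fun d _ => G.mem_edgeFinset.2 d.edge_mem, Finset.smul_sum]
  refine Finset.sum_congr rfl fun e he => ?_
  rw [Finset.sum_congr rfl fun d hd => congrArg F (Finset.mem_filter.1 hd).2, Finset.sum_const,
    G.dart_edge_fiber_card e (G.mem_edgeFinset.1 he)]

lemma sum_adj_sym2_eq_two_nsmul [DecidableEq V] (F : Sym2 V → M) :
    ∑ x, ∑ y, (if G.Adj x y then F s(x, y) else 0) = 2 • ∑ e ∈ G.edgeFinset, F e := by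
  rw [sum_adj_eq_sum_darts, ← sum_darts_edge_eq_two_nsmul]
  rfl

end EdgeSums

def edgeEnergy (sgn : Sym2 V → ℝ) (f : V → ℝ) : Sym2 V → ℝ :=
  Sym2.lift ⟨fun x y => f x ^ 2 + f y ^ 2 - 2 * sgn s(x, y) * f x * f y,
    fun x y => by dsimp only; rw [Sym2.eq_swap]; ring⟩

section EdgeEnergy

variable {sgn : Sym2 V → ℝ} {f : V → ℝ} {x y : V}

@[simp]
lemma edgeEnergy_mk :
    edgeEnergy sgn f s(x, y) = f x ^ 2 + f y ^ 2 - 2 * sgn s(x, y) * f x * f y :=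
  rfl

lemma edgeEnergy_mk_eq_sq (hs : sgn s(x, y) ^ 2 = 1) :
    edgeEnergy sgn f s(x, y) = (f x - sgn s(x, y) * f y) ^ 2 := by
  rw [edgeEnergy_mk]
  linear_combination (-f y ^ 2) * hs

lemma edgeEnergy_mk_of_eq_zero (hx : f x ^ 2 = 1) (hy : f y = 0) :
    edgeEnergy sgn f s(x, y) = 1 := by
  simp [hx, hy]

lemma edgeEnergy_mk_eq_zero_or_eq_four (hx : f x ^ 2 = 1) (hy : f y ^ 2 = 1)
    (hs : sgn s(x, y) ^ 2 = 1) :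
    edgeEnergy sgn f s(x, y) = 0 ∨ edgeEnergy sgn f s(x, y) = 4 := by
  have ht : (sgn s(x, y) * f x * f y) ^ 2 = 1 := by rw [mul_pow, mul_pow, hs, hx, hy]; ring
  rw [edgeEnergy_mk]
  rcases sq_eq_one_iff.1 ht with h | h
  · left; linear_combination hx + hy - 2 * h
  · right; linear_combination hx + hy - 2 * h

lemma sgn_eq_mul_of_edgeEnergy_mk_eq_zero (hx : f x ^ 2 = 1) (hy : f y ^ 2 = 1)
    (h : edgeEnergy sgn f s(x, y) = 0) : sgn s(x, y) = f x * f y := by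
  rw [edgeEnergy_mk] at h
  linear_combination (-(f x * f y) / 2) * h + (f x * f y / 2 - sgn s(x, y) * f y ^ 2) * hx
    + (f x * f y / 2 - sgn s(x, y)) * hy

end EdgeEnergy

lemma IsSigning.sq_eq_one {G : SimpleGraph V} {sgn : Sym2 V → ℝ} (hsgn : IsSigning G sgn)
    {e : Sym2 V} (he : e ∈ G.edgeSet) : sgn e ^ 2 = 1 :=
  sq_eq_one_iff.2 (hsgn e he)

lemma edgeEnergy_nonneg {G : SimpleGraph V} {sgn : Sym2 V → ℝ} (hsgn : IsSigning G sgn)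
    (f : V → ℝ) {e : Sym2 V} (he : e ∈ G.edgeSet) : 0 ≤ edgeEnergy sgn f e := by
  induction e using Sym2.inductionOn with
  | hf x y =>
    rw [edgeEnergy_mk_eq_sq (hsgn.sq_eq_one he)]
    positivity

lemma twistedLaplacian_eq_degMatrix_sub [Fintype V] [DecidableEq V] (G : SimpleGraph V)
    [DecidableRel G.Adj] (sgn : Sym2 V → ℝ) :
    twistedLaplacian G sgn = G.degMatrix ℝ - signedAdjMatrix G sgn := by
  ext x y
  by_cases hxy : x = y
  · subst hxy
    simp [twistedLaplacian, signedAdjMatrix, SimpleGraph.degMatrix]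
  · simp only [twistedLaplacian, signedAdjMatrix, SimpleGraph.degMatrix, of_apply,
      Matrix.sub_apply, diagonal_apply_ne _ hxy, hxy, if_false, zero_sub]
    split_ifs <;> simp

lemma dotProduct_twistedLaplacian_mulVec [Fintype V] [DecidableEq V] (G : SimpleGraph V)
    [DecidableRel G.Adj] (sgn : Sym2 V → ℝ) (f : V → ℝ) :
    f ⬝ᵥ twistedLaplacian G sgn *ᵥ f = ∑ e ∈ G.edgeFinset, edgeEnergy sgn f e := by
  set q : V → V → ℝ := fun x y => if G.Adj x y then f x ^ 2 - sgn s(x, y) * f x * f y else 0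
  have hform : f ⬝ᵥ twistedLaplacian G sgn *ᵥ f = ∑ x, ∑ y, q x y := by
    rw [twistedLaplacian_eq_degMatrix_sub, sub_mulVec, dotProduct_sub,
      SimpleGraph.dotProduct_mulVec_degMatrix, dotProduct, ← Finset.sum_sub_distrib]
    refine Finset.sum_congr rfl fun x _ => ?_
    rw [G.degree_eq_sum_if_adj (R := ℝ), Finset.sum_mul, Finset.sum_mul, mulVec,
      dotProduct, Finset.mul_sum, ← Finset.sum_sub_distrib]
    refine Finset.sum_congr rfl fun y _ => ?_
    simp only [q, signedAdjMatrix, of_apply]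
    split_ifs <;> ring
  have hsymm : ∀ x y, q x y + q y x = if G.Adj x y then edgeEnergy sgn f s(x, y) else 0 := by
    intro x y
    simp only [q, G.adj_comm y x, Sym2.eq_swap (a := y), edgeEnergy_mk]
    split_ifs <;> ring
  have htwice : 2 • (f ⬝ᵥ twistedLaplacian G sgn *ᵥ f) =
      2 • ∑ e ∈ G.edgeFinset, edgeEnergy sgn f e := by
    rw [← sum_adj_sym2_eq_two_nsmul, two_nsmul, hform]
    nth_rewrite 2 [Finset.sum_comm]
    simp only [← Finset.sum_add_distrib, hsymm]
  rw [two_nsmul, two_nsmul] at htwice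
  linarith

lemma mem_edgeBoundary [Fintype V] [DecidableEq V] {G : SimpleGraph V} {S : Set V}
    {e : Sym2 V} :
    e ∈ edgeBoundary G S ↔ e ∈ G.edgeSet ∧ ∃ x y, e = s(x, y) ∧ x ∈ S ∧ y ∉ S := by
  simp [edgeBoundary]

section Coherence

variable {H : SimpleGraph V} {sgn : Sym2 V → ℝ} {f : V → ℝ}

lemma prod_map_sgn_edges_mul (hsq : ∀ ⦃x y⦄, H.Adj x y → f x ^ 2 = 1)
    (hsw : ∀ ⦃x y⦄, H.Adj x y → sgn s(x, y) = f x * f y) {u v : V} (w : H.Walk u v) :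
    (w.edges.map sgn).prod * f v = f u := by
  induction w with
  | nil => simp
  | @cons a b _ h _ ih =>
    rw [SimpleGraph.Walk.edges_cons, List.map_cons, List.prod_cons, mul_assoc, ih, hsw h]
    linear_combination f a * hsq h.symm

lemma isCoherent_of_forall_adj_sgn_eq_mul (hsq : ∀ ⦃x y⦄, H.Adj x y → f x ^ 2 = 1)
    (hsw : ∀ ⦃x y⦄, H.Adj x y → sgn s(x, y) = f x * f y) : IsCoherent H sgn := by
  rintro v (_ | ⟨h, p⟩) hc
  · exact absurd rfl hc.ne_nil
  · have hw := prod_map_sgn_edges_mul hsq hsw (.cons h p)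
    set P := ((SimpleGraph.Walk.cons h p).edges.map sgn).prod
    linear_combination f v * hw + (1 - P) * hsq h

lemma isCoherent_deleteEdges_edgeEnergy_ne_zero (hsq : ∀ ⦃x y⦄, H.Adj x y → f x ^ 2 = 1) :
    IsCoherent (H.deleteEdges {e | edgeEnergy sgn f e ≠ 0}) sgn := by
  refine isCoherent_of_forall_adj_sgn_eq_mul (f := f) (fun x y h => hsq h.1) fun x y h => ?_
  rw [SimpleGraph.deleteEdges_adj, Set.mem_ofPred_eq, not_not] at h
  exact sgn_eq_mul_of_edgeEnergy_mk_eq_zero (hsq h.1) (hsq h.1.symm) h.2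

end Coherence

theorem four_mul_emc_add_card_edgeBoundary_le [Fintype V] [DecidableEq V] {G : SimpleGraph V}
    [DecidableRel G.Adj] {sgn : Sym2 V → ℝ} (hsgn : IsSigning G sgn) (U : Finset V)
    {f : V → ℝ} (hU : ∀ x ∈ U, f x ^ 2 = 1) (hUc : ∀ x ∉ U, f x = 0) :
    4 * (emc G sgn U : ℝ) + (edgeBoundary G U).card ≤ f ⬝ᵥ twistedLaplacian G sgn *ᵥ f := by
  set B := ({e | edgeEnergy sgn f e ≠ 0} ∩ (inducedOn G U).edgeSet).toFinset
  have hemc : emc G sgn U ≤ B.card := by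
    refine Nat.sInf_le ⟨B, rfl, ?_, ?_⟩
    · rw [Set.coe_toFinset]
      exact Set.inter_subset_right
    rw [Set.coe_toFinset, ← SimpleGraph.deleteEdges_eq_inter_edgeSet]
    exact isCoherent_deleteEdges_edgeEnergy_ne_zero fun x _ h => hU x h.2.1
  have hB : ∀ e ∈ B, e ∈ G.edgeFinset ∧ edgeEnergy sgn f e = 4 := by
    rintro ⟨x, y⟩ he
    obtain ⟨hne, hxy, hx, hy⟩ : edgeEnergy sgn f s(x, y) ≠ 0 ∧ (inducedOn G U).Adj x y := by
      simpa [B] using he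
    exact ⟨G.mem_edgeFinset.2 hxy, (edgeEnergy_mk_eq_zero_or_eq_four (hU x hx) (hU y hy)
      (hsgn.sq_eq_one hxy)).resolve_left hne⟩
  have hbd : ∀ e ∈ edgeBoundary G U, e ∈ G.edgeFinset ∧ edgeEnergy sgn f e = 1 := by
    intro e he
    obtain ⟨he, x, y, rfl, hx, hy⟩ := mem_edgeBoundary.1 he
    exact ⟨G.mem_edgeFinset.2 he, edgeEnergy_mk_of_eq_zero (hU x hx) (hUc y hy)⟩
  have hdisj : Disjoint B (edgeBoundary G U) := by
    refine Finset.disjoint_left.2 fun e heB heU => ?_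
    obtain ⟨-, x, y, rfl, -, hy⟩ := mem_edgeBoundary.1 heU
    have hxy : (inducedOn G U).Adj x y := by simpa [B] using (Set.mem_toFinset.1 heB).2
    exact hy hxy.2.2
  calc 4 * (emc G sgn U : ℝ) + (edgeBoundary G U).card
      ≤ 4 * B.card + (edgeBoundary G U).card := by gcongr
    _ = ∑ e ∈ B ∪ edgeBoundary G U, edgeEnergy sgn f e := by
      rw [Finset.sum_union hdisj, Finset.sum_congr rfl fun e he => (hB e he).2,
        Finset.sum_congr rfl fun e he => (hbd e he).2]
      simp [mul_comm]
    _ ≤ ∑ e ∈ G.edgeFinset, edgeEnergy sgn f e := by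
      refine Finset.sum_le_sum_of_subset_of_nonneg ?_ fun e he _ =>
        edgeEnergy_nonneg hsgn f (G.mem_edgeFinset.1 he)
      exact Finset.union_subset (fun e he => (hB e he).1) fun e he => (hbd e he).1
    _ = f ⬝ᵥ twistedLaplacian G sgn *ᵥ f := (dotProduct_twistedLaplacian_mulVec G sgn f).symm

theorem rST_inner_twistedLaplacian_ge_general [Fintype V] [DecidableEq V] (G : SimpleGraph V)
    [DecidableRel G.Adj] (sgn : Sym2 V → ℝ) (hsgn : IsSigning G sgn)
    (S T : Finset V) :
    (fun x => if x ∈ S then (1 : ℝ) else if x ∈ T then -1 else 0) ⬝ᵥ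
        (twistedLaplacian G sgn).mulVec
          (fun x => if x ∈ S then (1 : ℝ) else if x ∈ T then -1 else 0)
      ≥ 4 * (emc G sgn ↑(S ∪ T) : ℝ) + (edgeBoundary G ↑(S ∪ T)).card := by
  refine four_mul_emc_add_card_edgeBoundary_le hsgn (S ∪ T) (fun x hx => ?_) fun x hx => ?_
  · split_ifs with hS hT
    · norm_num
    · norm_num
    · exact absurd hx (by simp [hS, hT])
  · rw [Finset.mem_union, not_or] at hx
    simp [hx.1, hx.2]

/-- For disjoint `S, T ⊆ V` with `S ∪ T ≠ ∅` and `r_{S,T}` the function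
which is `1` on `S`, `-1` on `T` and `0` elsewhere,
`⟨r_{S,T}, Δ^τ r_{S,T}⟩ ≥ 4 e_mc(S ∪ T) + |∂(S ∪ T)|`. -/
theorem rST_inner_twistedLaplacian_ge [Fintype V] [DecidableEq V] (G : SimpleGraph V)
    [DecidableRel G.Adj] (sgn : Sym2 V → ℝ) (hsgn : IsSigning G sgn)
    (S T : Finset V) (hST : Disjoint S T) (hne : (S ∪ T).Nonempty) :
    (fun x => if x ∈ S then (1 : ℝ) else if x ∈ T then -1 else 0) ⬝ᵥ
        (twistedLaplacian G sgn).mulVec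
          (fun x => if x ∈ S then (1 : ℝ) else if x ∈ T then -1 else 0)
      ≥ 4 * (emc G sgn ↑(S ∪ T) : ℝ) + (edgeBoundary G ↑(S ∪ T)).card :=
  rST_inner_twistedLaplacian_ge_general G sgn hsgn S T

end SignedPaper
end
end

section
/- Let G be a finite nonempty signed graph with maximal degree d_max and let μ₁ be the smallest eigenvalue of the twisted Laplacian Δ^τ. Then μ₁ ≥ d_max − √(d_max² − ψ(G)²). -/
/-!
Let `f` be an eigenfunction of `Δ^τ` for `μ`. For `t > 0` consider the level set
`S_t = {x | t ≤ f(x)²}`. Switching by the sign of `f` makes the signed graph induced on `S_t`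
coherent once its frustrated edges (those with `sgn(x,y) f(x) f(y) < 0`) are deleted, so
`ψ |S_t| ≤ |∂S_t| + 2 #(frustrated edges in S_t)`. Integrating over `t` (co-area formula) gives
`ψ ‖f‖² ≤ ∑_{(x,y)} (f(x)² - f(y)²)⁺ + ∑_{(x,y) frustrated} min(f(x)², f(y)²)`
over darts `(x,y)`. Each summand is bounded by a product `L·R` where `∑ L² ≤ ⟨f, Δ^τ f⟩ = μ ‖f‖²` and
`∑ (L² + R²) ≤ 2 ∑ d(x) f(x)² ≤ 2 d_max ‖f‖²`. By Cauchy–Schwarz `(ψ‖f‖²)² ≤ ∑ L² ∑ R²`,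
whence `ψ² ≤ μ (2 d_max - μ)`, which is the claim.
-/

open scoped Classical
open Matrix

noncomputable section

namespace SignedPaper

variable {V : Type*}

open Finset MeasureTheory

section Darts

variable [Fintype V] {G : SimpleGraph V} [DecidableRel G.Adj]

lemma sum_darts_symm {M : Type*} [AddCommMonoid M] (g : G.Dart → M) :
    ∑ d : G.Dart, g d.symm = ∑ d, g d :=
  Equiv.sum_comp (Function.Involutive.toPerm _ SimpleGraph.Dart.symm_involutive) g

lemma sum_darts_eq_sum_adj {M : Type*} [AddCommMonoid M] (h : V → V → M) :
    ∑ d : G.Dart, h d.fst d.snd = ∑ x, ∑ y, if G.Adj x y then h x y else 0 := by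
  let e : G.Dart ≃ {p : V × V // G.Adj p.1 p.2} :=
    { toFun := fun d => ⟨d.toProd, d.adj⟩, invFun := fun p => ⟨p.1, p.2⟩ }
  rw [← Fintype.sum_prod_type' (fun x y => if G.Adj x y then h x y else 0), ← sum_filter,
    ← sum_subtype_eq_sum_filter, subtype_univ]
  exact Fintype.sum_equiv e _ _ fun _ => rfl

lemma sum_darts_fst [DecidableEq V] {R : Type*} [NonAssocSemiring R] (g : V → R) :
    ∑ d : G.Dart, g d.fst = ∑ x, (G.degree x : R) * g x := by
  rw [sum_darts_eq_sum_adj (fun x _ => g x)]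
  refine sum_congr rfl fun x _ => ?_
  rw [← sum_filter, sum_const, ← G.neighborFinset_eq_filter, G.card_neighborFinset_eq_degree,
    nsmul_eq_mul]

lemma sum_darts_fst_add_snd [DecidableEq V] {R : Type*} [NonAssocSemiring R] (g : V → R) :
    ∑ d : G.Dart, (g d.fst + g d.snd) = 2 * ∑ x, (G.degree x : R) * g x := by
  have hsnd : ∑ d : G.Dart, g d.snd = ∑ d : G.Dart, g d.fst := sum_darts_symm fun d => g d.fst
  rw [sum_add_distrib, hsnd, sum_darts_fst, two_mul]

end Darts

section Quadratic

variable [Fintype V] {G : SimpleGraph V} [DecidableRel G.Adj] {sgn : Sym2 V → ℝ}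

lemma dotProduct_signedAdjMatrix_mulVec (f : V → ℝ) :
    f ⬝ᵥ (signedAdjMatrix G sgn *ᵥ f) = ∑ d : G.Dart, sgn d.edge * (f d.fst * f d.snd) := by
  refine Eq.trans ?_ (sum_darts_eq_sum_adj fun x y => sgn s(x, y) * (f x * f y)).symm
  simp only [dotProduct, mulVec, signedAdjMatrix, of_apply, mul_sum]
  refine sum_congr rfl fun x _ => sum_congr rfl fun y _ => ?_
  split_ifs <;> ring

variable [DecidableEq V]

lemma twistedLaplacian_eq_diagonal_sub :
    twistedLaplacian G sgn = diagonal (fun x => (G.degree x : ℝ)) - signedAdjMatrix G sgn := by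
  ext x y
  by_cases hxy : x = y
  · subst hxy
    simp [twistedLaplacian, signedAdjMatrix]
  · by_cases hadj : G.Adj x y <;> simp [twistedLaplacian, signedAdjMatrix, hxy, hadj]

lemma dotProduct_twistedLaplacian_mulVec_s10 (f : V → ℝ) :
    f ⬝ᵥ (twistedLaplacian G sgn *ᵥ f) =
      ∑ x, (G.degree x : ℝ) * f x ^ 2 - ∑ d : G.Dart, sgn d.edge * (f d.fst * f d.snd) := by
  rw [twistedLaplacian_eq_diagonal_sub, sub_mulVec, dotProduct_sub,
    dotProduct_signedAdjMatrix_mulVec]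
  congr 1
  simp only [dotProduct, mulVec_diagonal]
  exact sum_congr rfl fun x _ => by ring

end Quadratic

lemma Matrix.exists_mulVec_eq_smul_of_mem_spectrum {n : Type*} [Fintype n] [DecidableEq n]
    {A : Matrix n n ℝ} {μ : ℝ} (h : μ ∈ spectrum ℝ A) : ∃ f ≠ 0, A *ᵥ f = μ • f := by
  rw [← spectrum_toLin', ← Module.End.hasEigenvalue_iff_mem_spectrum] at h
  obtain ⟨f, hf⟩ := h.exists_hasEigenvector
  exact ⟨f, hf.2, by simpa using hf.apply_eq_smul⟩

section Switching

variable {sgn : Sym2 V → ℝ} {σ : V → ℝ}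

lemma prod_map_sgn_edges_of_switching {H : SimpleGraph V} (hσ : ∀ x, σ x * σ x = 1)
    (hH : ∀ ⦃x y⦄, H.Adj x y → sgn s(x, y) = σ x * σ y) {u v : V} (p : H.Walk u v) :
    (p.edges.map sgn).prod = σ u * σ v := by
  induction p with
  | nil => exact (hσ _).symm
  | @cons x y z h p ih =>
    rw [SimpleGraph.Walk.edges_cons, List.map_cons, List.prod_cons, ih, hH h]
    linear_combination σ x * σ z * hσ y

lemma isCoherent_of_switching {H : SimpleGraph V} (hσ : ∀ x, σ x * σ x = 1)
    (hH : ∀ ⦃x y⦄, H.Adj x y → sgn s(x, y) = σ x * σ y) : IsCoherent H sgn :=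
  fun v c _ => (prod_map_sgn_edges_of_switching hσ hH c).trans (hσ v)

lemma emc_le_card_of_switching {G : SimpleGraph V} {S : Set V} {F : Finset (Sym2 V)}
    (hF : ↑F ⊆ (inducedOn G S).edgeSet) (hσ : ∀ x, σ x * σ x = 1)
    (hbal : ∀ ⦃x y⦄, (inducedOn G S).Adj x y → s(x, y) ∉ F → sgn s(x, y) = σ x * σ y) :
    emc G sgn S ≤ #F :=
  Nat.sInf_le ⟨F, rfl, hF, isCoherent_of_switching hσ fun _ _ h =>
    hbal ((SimpleGraph.deleteEdges_adj ..).1 h).1 ((SimpleGraph.deleteEdges_adj ..).1 h).2⟩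

end Switching

lemma IsSigning.abs_mul {G : SimpleGraph V} {sgn : Sym2 V → ℝ} (hsgn : IsSigning G sgn)
    {e : Sym2 V} (he : e ∈ G.edgeSet) (a : ℝ) : |sgn e * a| = |a| := by
  rcases hsgn e he with h | h <;> simp [h]

lemma eq_sign_mul_sign_of_nonneg {s a b : ℝ} (hs : s = 1 ∨ s = -1) (ha : a ≠ 0) (hb : b ≠ 0)
    (h : 0 ≤ s * (a * b)) :
    s = (if 0 ≤ a then 1 else -1) * (if 0 ≤ b then 1 else -1) := by
  rcases lt_or_gt_of_ne ha with ha | ha <;> rcases lt_or_gt_of_ne hb with hb | hb <;>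
    simp only [ha.le, ha.not_ge, hb.le, hb.not_ge, if_true, if_false] <;>
    rcases hs with rfl | rfl <;> norm_num <;> nlinarith

section Cheeger

variable [Fintype V] [DecidableEq V] {G : SimpleGraph V} {sgn : Sym2 V → ℝ}

lemma psiSet_nonneg (S : Finset V) : 0 ≤ psiSet G sgn S := by
  unfold psiSet
  positivity

lemma psi_nonneg : 0 ≤ psi G sgn :=
  Real.sInf_nonneg (by rintro _ ⟨S, -, rfl⟩; exact psiSet_nonneg S)

lemma psi_mul_card_le (S : Finset V) :
    psi G sgn * #S ≤ #(edgeBoundary G S) + 2 * emc G sgn S := by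
  rcases S.eq_empty_or_nonempty with rfl | hS
  · simp only [card_empty, Nat.cast_zero, mul_zero]
    positivity
  have hle : psi G sgn ≤ psiSet G sgn S :=
    csInf_le ⟨0, by rintro _ ⟨T, -, rfl⟩; exact psiSet_nonneg T⟩ ⟨S, hS, rfl⟩
  rwa [psiSet, le_div_iff₀ (by simpa using hS)] at hle

variable [DecidableRel G.Adj]

lemma card_edgeBoundary_eq_card_darts (S : Set V) [DecidablePred (· ∈ S)] :
    #(edgeBoundary G S) = #{d : G.Dart | d.fst ∈ S ∧ d.snd ∉ S} := by
  symm
  refine card_bij (fun d _ => d.edge) ?_ ?_ ?_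
  · intro d hd
    simp only [mem_filter, mem_univ, true_and] at hd
    simp only [edgeBoundary, mem_filter, mem_univ, true_and]
    exact ⟨d.edge_mem, d.fst, d.snd, rfl, hd⟩
  · intro d hd d' hd' h
    simp only [mem_filter, mem_univ, true_and] at hd hd'
    rcases (SimpleGraph.dart_edge_eq_iff d d').1 h with h | rfl
    · exact h
    · exact absurd hd'.1 hd.2
  · intro e he
    simp only [edgeBoundary, mem_filter, mem_univ, true_and] at he
    obtain ⟨hadj, x, y, rfl, hx, hy⟩ := he
    exact ⟨⟨(x, y), hadj⟩, by simp [hx, hy], rfl⟩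

lemma card_eq_two_mul_card_image_edge {s : Finset G.Dart} (hs : ∀ d, d.symm ∈ s ↔ d ∈ s) :
    #s = 2 * #(s.image SimpleGraph.Dart.edge) := by
  rw [card_eq_sum_card_fiberwise (f := SimpleGraph.Dart.edge)
      (t := s.image SimpleGraph.Dart.edge) fun _ hd => mem_image_of_mem _ hd, mul_comm,
    ← smul_eq_mul, ← sum_const]
  refine sum_congr rfl fun e he => ?_
  obtain ⟨d₀, hd₀, rfl⟩ := mem_image.1 he
  rw [← G.dart_edge_fiber_card _ d₀.edge_mem]
  congr 1
  ext d
  simp only [mem_filter, mem_univ, true_and, and_iff_right_iff_imp]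
  intro h
  rcases (SimpleGraph.dart_edge_eq_iff d d₀).1 h with rfl | rfl
  · exact hd₀
  · exact (hs d₀).2 hd₀

end Cheeger

def frustratedDarts [Fintype V] (G : SimpleGraph V) [DecidableRel G.Adj] (sgn : Sym2 V → ℝ)
    (f : V → ℝ) : Finset G.Dart :=
  {d | sgn d.edge * (f d.fst * f d.snd) < 0}

section LevelSets

variable [Fintype V] [DecidableEq V] {G : SimpleGraph V} [DecidableRel G.Adj]
  {sgn : Sym2 V → ℝ}

lemma psi_mul_card_levelSet_le (hsgn : IsSigning G sgn) (f : V → ℝ) {t : ℝ} (ht : 0 < t) :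
    psi G sgn * #{x | t ≤ f x ^ 2} ≤
      #{d : G.Dart | f d.snd ^ 2 < t ∧ t ≤ f d.fst ^ 2} +
        #((frustratedDarts G sgn f).filter fun d => t ≤ f d.fst ^ 2 ∧ t ≤ f d.snd ^ 2) := by
  set S : Finset V := {x | t ≤ f x ^ 2}
  set F := ((frustratedDarts G sgn f).filter fun d => t ≤ f d.fst ^ 2 ∧ t ≤ f d.snd ^ 2).image
    SimpleGraph.Dart.edge
  have hbdry : #(edgeBoundary G S) = #{d : G.Dart | f d.snd ^ 2 < t ∧ t ≤ f d.fst ^ 2} := by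
    rw [card_edgeBoundary_eq_card_darts]
    congr 1
    ext d
    simp [S, and_comm]
  have hF : #((frustratedDarts G sgn f).filter fun d => t ≤ f d.fst ^ 2 ∧ t ≤ f d.snd ^ 2) =
      2 * #F := by
    refine card_eq_two_mul_card_image_edge fun d => ?_
    simp only [frustratedDarts, mem_filter, mem_univ, true_and, SimpleGraph.Dart.edge_symm,
      SimpleGraph.Dart.symm_toProd, Prod.fst_swap, Prod.snd_swap]
    rw [mul_comm (f d.snd)]
    tauto
  have hne : ∀ x ∈ (S : Set V), f x ≠ 0 := fun x hx h0 => by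
    simp [S, h0] at hx
    linarith
  -- switching by the sign of `f` balances every edge of `S` outside `F`; here `f ≠ 0` on `S`
  have hemc : emc G sgn S ≤ #F := by
    refine emc_le_card_of_switching (σ := fun x => if 0 ≤ f x then 1 else -1) ?_
      (fun x => by split_ifs <;> norm_num) ?_
    · intro e he
      obtain ⟨d, hd, rfl⟩ := mem_image.1 (mem_coe.1 he)
      simp only [frustratedDarts, mem_filter, mem_univ, true_and] at hd
      exact ⟨d.adj, by simpa [S] using hd.2.1, by simpa [S] using hd.2.2⟩
    · rintro x y ⟨hadj, hx, hy⟩ hxy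
      refine eq_sign_mul_sign_of_nonneg (hsgn _ hadj) (hne x hx) (hne y hy)
        (not_lt.1 fun hneg => hxy (mem_image.2 ⟨⟨(x, y), hadj⟩, ?_, rfl⟩))
      simp_all [S, frustratedDarts]
  calc psi G sgn * #S ≤ #(edgeBoundary G S) + 2 * emc G sgn S := psi_mul_card_le S
    _ ≤ _ := by rw [hbdry, hF]; push_cast; gcongr

end LevelSets

section LayerCake

lemma integrable_indicator_Ioc_one (a b : ℝ) :
    Integrable ((Set.Ioc a b).indicator (1 : ℝ → ℝ)) :=
  (integrable_indicator_iff measurableSet_Ioc).2 (integrableOn_const measure_Ioc_lt_top.ne)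

lemma integral_indicator_Ioc_one (a b : ℝ) :
    ∫ t, (Set.Ioc a b).indicator (1 : ℝ → ℝ) t = max (b - a) 0 := by
  rw [integral_indicator_one measurableSet_Ioc, Real.volume_real_Ioc]

variable [Fintype V] [DecidableEq V] {G : SimpleGraph V} [DecidableRel G.Adj]
  {sgn : Sym2 V → ℝ}

lemma psi_mul_sum_indicator_le (hsgn : IsSigning G sgn) (f : V → ℝ) (t : ℝ) :
    psi G sgn * ∑ x, (Set.Ioc 0 (f x ^ 2)).indicator 1 t ≤
      ∑ d : G.Dart, (Set.Ioc (f d.snd ^ 2) (f d.fst ^ 2)).indicator 1 t +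
        ∑ d ∈ frustratedDarts G sgn f,
          (Set.Ioc 0 (min (f d.fst ^ 2) (f d.snd ^ 2))).indicator 1 t := by
  rcases le_or_gt t 0 with ht | ht
  · have hzero : ∀ x, (Set.Ioc 0 (f x ^ 2)).indicator (1 : ℝ → ℝ) t = 0 := fun x =>
      Set.indicator_of_notMem (fun h => (h.1.trans_le ht).false) _
    simp only [hzero, sum_const_zero, mul_zero]
    have hnonneg : ∀ a b : ℝ, 0 ≤ (Set.Ioc a b).indicator (1 : ℝ → ℝ) t := fun _ _ =>
      Set.indicator_nonneg (fun _ _ => zero_le_one) _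
    exact add_nonneg (sum_nonneg fun _ _ => hnonneg _ _) (sum_nonneg fun _ _ => hnonneg _ _)
  · simpa [Set.indicator_apply, sum_boole, ht] using psi_mul_card_levelSet_le hsgn f ht

lemma psi_mul_sum_sq_le (hsgn : IsSigning G sgn) (f : V → ℝ) :
    psi G sgn * ∑ x, f x ^ 2 ≤
      ∑ d : G.Dart, max (f d.fst ^ 2 - f d.snd ^ 2) 0 +
        ∑ d ∈ frustratedDarts G sgn f, min (f d.fst ^ 2) (f d.snd ^ 2) := by
  have hI : ∀ a b : ℝ, Integrable ((Set.Ioc a b).indicator (1 : ℝ → ℝ)) :=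
    integrable_indicator_Ioc_one
  have hmono := integral_mono
    ((integrable_finsetSum _ fun _ _ => hI _ _).const_mul (psi G sgn))
    ((integrable_finsetSum _ fun _ _ => hI _ _).add (integrable_finsetSum _ fun _ _ => hI _ _))
    (psi_mul_sum_indicator_le hsgn f)
  simpa [integral_const_mul, integral_finsetSum _ fun _ _ => hI _ _,
    integral_add (integrable_finsetSum _ fun _ _ => hI _ _)
      (integrable_finsetSum _ fun _ _ => hI _ _),
    integral_indicator_Ioc_one, max_eq_left, sq_nonneg] using hmono

end LayerCake

section CauchySchwarz

/-- On a dart `(x, y)` both factors are evaluated at `u = |f x|`, `v = |f y|` and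
`w = sgn(x,y) f x f y`, so that `w < 0` marks a frustrated dart. -/
def cheegerFactorL (u v w : ℝ) : ℝ := if w < 0 then u else max (u - v) 0

def cheegerFactorR (u v w : ℝ) : ℝ := if w < 0 then u else if v < u then u + v else 0

variable {u v w : ℝ}

lemma max_sq_sub_sq_add_le_cheegerFactorL_mul_R (hu : 0 ≤ u) (hv : 0 ≤ v) :
    max (u ^ 2 - v ^ 2) 0 + (if w < 0 then min (u ^ 2) (v ^ 2) else 0) ≤
      cheegerFactorL u v w * cheegerFactorR u v w := by
  unfold cheegerFactorL cheegerFactorR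
  rcases le_total v u with h | h
  · rw [max_eq_left (by nlinarith), min_eq_right (by nlinarith), max_eq_left (by linarith)]
    split_ifs <;> nlinarith
  · rw [max_eq_right (by nlinarith), min_eq_left (by nlinarith), max_eq_right (by linarith)]
    split_ifs <;> nlinarith

lemma sq_cheegerFactorL_add_sq_cheegerFactorL_le (hw : |w| = u * v) :
    cheegerFactorL u v w ^ 2 + cheegerFactorL v u w ^ 2 ≤ u ^ 2 + v ^ 2 - 2 * w := by
  unfold cheegerFactorL
  split_ifs with hneg
  · rw [abs_of_neg hneg] at hw
    nlinarith
  · rw [abs_of_nonneg (not_lt.1 hneg)] at hw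
    rcases le_total v u with h | h
    · rw [max_eq_left (by linarith), max_eq_right (by linarith)]
      nlinarith
    · rw [max_eq_right (by linarith), max_eq_left (by linarith)]
      nlinarith

lemma sq_cheegerFactors_add_swap_le :
    cheegerFactorL u v w ^ 2 + cheegerFactorR u v w ^ 2 +
        (cheegerFactorL v u w ^ 2 + cheegerFactorR v u w ^ 2) ≤ 2 * (u ^ 2 + v ^ 2) := by
  unfold cheegerFactorL cheegerFactorR
  rcases lt_trichotomy u v with h | rfl | h
  · rw [max_eq_right (by linarith : u - v ≤ 0), max_eq_left (by linarith : 0 ≤ v - u)]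
    split_ifs <;> nlinarith
  · rw [sub_self, max_self]
    split_ifs <;> nlinarith
  · rw [max_eq_left (by linarith : 0 ≤ u - v), max_eq_right (by linarith : v - u ≤ 0)]
    split_ifs <;> nlinarith

end CauchySchwarz

section DartSums

variable [Fintype V] {G : SimpleGraph V} [DecidableRel G.Adj] {sgn : Sym2 V → ℝ}

lemma sum_darts_le_sum_cheegerFactorL_mul_R (f : V → ℝ) :
    ∑ d : G.Dart, max (f d.fst ^ 2 - f d.snd ^ 2) 0 +
        ∑ d ∈ frustratedDarts G sgn f, min (f d.fst ^ 2) (f d.snd ^ 2) ≤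
      ∑ d : G.Dart, cheegerFactorL |f d.fst| |f d.snd| (sgn d.edge * (f d.fst * f d.snd)) *
        cheegerFactorR |f d.fst| |f d.snd| (sgn d.edge * (f d.fst * f d.snd)) := by
  rw [frustratedDarts, sum_filter, ← sum_add_distrib]
  gcongr with d
  simpa only [sq_abs] using
    max_sq_sub_sq_add_le_cheegerFactorL_mul_R (abs_nonneg (f d.fst)) (abs_nonneg (f d.snd))

variable [DecidableEq V]

lemma sum_darts_sq_cheegerFactorL_le (hsgn : IsSigning G sgn) (f : V → ℝ) :
    ∑ d : G.Dart,
        cheegerFactorL |f d.fst| |f d.snd| (sgn d.edge * (f d.fst * f d.snd)) ^ 2 ≤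
      ∑ x, (G.degree x : ℝ) * f x ^ 2 - ∑ d : G.Dart, sgn d.edge * (f d.fst * f d.snd) := by
  have hpair : ∀ d : G.Dart,
      cheegerFactorL |f d.fst| |f d.snd| (sgn d.edge * (f d.fst * f d.snd)) ^ 2 +
          cheegerFactorL |f d.snd| |f d.fst| (sgn d.edge * (f d.fst * f d.snd)) ^ 2 ≤
        (f d.fst ^ 2 + f d.snd ^ 2) - 2 * (sgn d.edge * (f d.fst * f d.snd)) := fun d => by
    simpa only [sq_abs] using
      sq_cheegerFactorL_add_sq_cheegerFactorL_le (u := |f d.fst|) (v := |f d.snd|)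
        (by rw [hsgn.abs_mul d.edge_mem, abs_mul])
  have hsum := sum_le_sum fun d (_ : d ∈ univ) => hpair d
  rw [sum_add_distrib, sum_sub_distrib, sum_darts_fst_add_snd fun x => f x ^ 2, ← mul_sum] at hsum
  have hsymm := sum_darts_symm fun d : G.Dart =>
    cheegerFactorL |f d.fst| |f d.snd| (sgn d.edge * (f d.fst * f d.snd)) ^ 2
  simp only [SimpleGraph.Dart.symm_toProd, Prod.fst_swap, Prod.snd_swap,
    SimpleGraph.Dart.edge_symm, mul_comm (f _) (f _)] at hsymm
  linarith

lemma sum_darts_sq_cheegerFactors_le (f : V → ℝ) :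
    ∑ d : G.Dart,
        cheegerFactorL |f d.fst| |f d.snd| (sgn d.edge * (f d.fst * f d.snd)) ^ 2 +
      ∑ d : G.Dart,
        cheegerFactorR |f d.fst| |f d.snd| (sgn d.edge * (f d.fst * f d.snd)) ^ 2 ≤
      2 * ∑ x, (G.degree x : ℝ) * f x ^ 2 := by
  have hsum := sum_le_sum fun d (_ : d ∈ (univ : Finset G.Dart)) =>
    sq_cheegerFactors_add_swap_le (u := |f d.fst|) (v := |f d.snd|)
      (w := sgn d.edge * (f d.fst * f d.snd))
  simp only [sq_abs] at hsum
  rw [sum_add_distrib, ← mul_sum, sum_darts_fst_add_snd fun x => f x ^ 2] at hsum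
  have hsymm := sum_darts_symm fun d : G.Dart =>
    cheegerFactorL |f d.fst| |f d.snd| (sgn d.edge * (f d.fst * f d.snd)) ^ 2 +
      cheegerFactorR |f d.fst| |f d.snd| (sgn d.edge * (f d.fst * f d.snd)) ^ 2
  simp only [SimpleGraph.Dart.symm_toProd, Prod.fst_swap, Prod.snd_swap,
    SimpleGraph.Dart.edge_symm, mul_comm (f _) (f _)] at hsymm
  rw [hsymm] at hsum
  rw [← sum_add_distrib]
  linarith

end DartSums

lemma sub_sqrt_le_of_le_sum_mul {ι : Type*} (s : Finset ι) (A B : ι → ℝ) {d μ ψ N : ℝ}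
    (hN : 0 < N) (hψ : 0 ≤ ψ) (hmul : ψ * N ≤ ∑ i ∈ s, A i * B i)
    (hA : ∑ i ∈ s, A i ^ 2 ≤ μ * N) (hAB : ∑ i ∈ s, A i ^ 2 + ∑ i ∈ s, B i ^ 2 ≤ 2 * d * N) :
    d - √(d ^ 2 - ψ ^ 2) ≤ μ := by
  rcases le_or_gt d μ with hdμ | hμd
  · linarith [Real.sqrt_nonneg (d ^ 2 - ψ ^ 2)]
  set a := ∑ i ∈ s, A i ^ 2
  set b := ∑ i ∈ s, B i ^ 2
  have ha : 0 ≤ a := sum_nonneg fun _ _ => sq_nonneg _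
  have hCS : (ψ * N) ^ 2 ≤ a * b :=
    (pow_le_pow_left₀ (by positivity) hmul 2).trans (sum_mul_sq_le_sq_mul_sq s A B)
  have hμN : μ * N ≤ d * N := by nlinarith
  have hab : a * b ≤ μ * N * (2 * d * N - μ * N) := by nlinarith
  have hψμ : ψ ^ 2 ≤ μ * (2 * d - μ) := by
    have : ψ ^ 2 * N ^ 2 ≤ μ * (2 * d - μ) * N ^ 2 := by nlinarith
    exact le_of_mul_le_mul_right this (by positivity)
  have hsqrt : |d - μ| ≤ √(d ^ 2 - ψ ^ 2) := Real.abs_le_sqrt (by nlinarith)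
  linarith [le_abs_self (d - μ)]

theorem mu1_ge_cheeger_lower_general [Fintype V] [DecidableEq V]
    (G : SimpleGraph V) [DecidableRel G.Adj] (sgn : Sym2 V → ℝ) (hsgn : IsSigning G sgn)
    (mu1 : ℝ)
    (hmem : mu1 ∈ spectrum ℝ (twistedLaplacian G sgn)) :
    (G.maxDegree : ℝ) - Real.sqrt ((G.maxDegree : ℝ) ^ 2 - psi G sgn ^ 2) ≤ mu1 := by
  obtain ⟨f, hf0, hf⟩ := Matrix.exists_mulVec_eq_smul_of_mem_spectrum hmem
  have hN : 0 < ∑ x, f x ^ 2 := by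
    obtain ⟨x, hx⟩ := Function.ne_iff.1 hf0
    exact (pow_pos (abs_pos.2 hx) 2).trans_le
      (by simpa using single_le_sum (fun y _ => sq_nonneg (f y)) (mem_univ x))
  have hRayleigh : mu1 * ∑ x, f x ^ 2 =
      ∑ x, (G.degree x : ℝ) * f x ^ 2 - ∑ d : G.Dart, sgn d.edge * (f d.fst * f d.snd) := by
    rw [← dotProduct_twistedLaplacian_mulVec_s10, hf, dotProduct_smul, smul_eq_mul]
    simp only [dotProduct, sq]
  have hdeg : ∑ x, (G.degree x : ℝ) * f x ^ 2 ≤ G.maxDegree * ∑ x, f x ^ 2 := by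
    rw [mul_sum]
    gcongr with x
    exact_mod_cast G.degree_le_maxDegree x
  refine sub_sqrt_le_of_le_sum_mul univ
    (fun d : G.Dart => cheegerFactorL |f d.fst| |f d.snd| (sgn d.edge * (f d.fst * f d.snd)))
    (fun d : G.Dart => cheegerFactorR |f d.fst| |f d.snd| (sgn d.edge * (f d.fst * f d.snd)))
    hN psi_nonneg ?_ ?_ ?_
  · exact (psi_mul_sum_sq_le hsgn f).trans (sum_darts_le_sum_cheegerFactorL_mul_R f)
  · exact (sum_darts_sq_cheegerFactorL_le hsgn f).trans hRayleigh.ge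
  · linarith [sum_darts_sq_cheegerFactors_le (G := G) (sgn := sgn) f]

/-- The smallest eigenvalue `μ₁` of the twisted Laplacian satisfies
`μ₁ ≥ d_max - √(d_max² - ψ(G)²)`. -/
theorem mu1_ge_cheeger_lower [Fintype V] [DecidableEq V] [Nonempty V]
    (G : SimpleGraph V) [DecidableRel G.Adj] (sgn : Sym2 V → ℝ) (hsgn : IsSigning G sgn)
    (mu1 : ℝ)
    (hmem : mu1 ∈ spectrum ℝ (twistedLaplacian G sgn))
    (hmin : ∀ mu ∈ spectrum ℝ (twistedLaplacian G sgn), mu1 ≤ mu) :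
    (G.maxDegree : ℝ) - Real.sqrt ((G.maxDegree : ℝ) ^ 2 - psi G sgn ^ 2) ≤ mu1 :=
  mu1_ge_cheeger_lower_general G sgn hsgn mu1 hmem

end SignedPaper
end
end
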